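/- Suppose the fixed-point equation P₁ η* = P₂ v* holds with ŷ := P₁ η*, and suppose the magnitude-uniqueness hypothesis gives ŷ = e^{iθ} y₀ for some real θ, where y₀ = Ψ x₀ and |y₀| = b. If γ₁ = −1, then v* = y*, the phases of y* agree with those of ŷ, hence P₂ y* = e^{iθ} y₀; and if moreover γ₂ ≠ 0, then substituting into η* = (1+γ₂)P₂ y* − γ₂ y* and applying P₁ yields P₁ y* = e^{iθ} y₀ and Ψ* y* = e^{iθ} x₀. -/

import Mathlib

/-!
With `γ₁ = -1` we have `v* = y*`, so the fixed-point equation reads `P₂ y* = ŷ`. Hence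
`η* = (1 + γ₂) ŷ - γ₂ y*`, and since `ŷ = e^{iθ} Ψ x₀` lies in the range of the projection `P₁`,
applying `P₁` gives `ŷ = (1 + γ₂) ŷ - γ₂ P₁ y*`, i.e. `P₁ y* = ŷ` when `γ₂ ≠ 0`. Finally
`Ψ* P₁ = Ψ*` turns this into `Ψ* y* = e^{iθ} x₀`.
-/

open Matrix

namespace Matrix

variable {l k R : Type*} [Fintype l] [Fintype k] [DecidableEq k] [Semiring R]
  {A : Matrix l k R} {B : Matrix k l R}

theorem mul_mulVec_mulVec_of_mul_eq_one (h : B * A = 1) (x : k → R) :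
    (A * B) *ᵥ (A *ᵥ x) = A *ᵥ x := by
  rw [mulVec_mulVec, Matrix.mul_assoc, h, Matrix.mul_one]

theorem mulVec_mul_mulVec_of_mul_eq_one (h : B * A = 1) (y : l → R) :
    B *ᵥ ((A * B) *ᵥ y) = B *ᵥ y := by
  rw [mulVec_mulVec, ← Matrix.mul_assoc, h, Matrix.one_mul]

end Matrix

theorem LinearMap.map_eq_of_map_smul_sub_smul_eq {K V : Type*} [Field K] [AddCommGroup V]
    [Module K V] (f : V →ₗ[K] V) {γ : K} (hγ : γ ≠ 0) {y z : V} (hz : f z = z)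
    (h : f ((1 + γ) • z - γ • y) = z) : f y = z := by
  rw [map_sub, map_smul, map_smul, hz] at h
  refine smul_right_injective V hγ ?_
  linear_combination (norm := module) -h

theorem stmt_10_general {m n : ℕ} (Ψ : Matrix (Fin m) (Fin n) ℂ) (hΨ : Ψᴴ * Ψ = 1)
    (P₁ : (Fin m → ℂ) → (Fin m → ℂ)) (hP₁ : ∀ z, P₁ z = (Ψ * Ψᴴ).mulVec z)
    (P₂ : (Fin m → ℂ) → (Fin m → ℂ))
    (x₀ : Fin n → ℂ) (y₀ : Fin m → ℂ) (hy₀ : y₀ = Ψ.mulVec x₀)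
    (γ₁ γ₂ : ℝ) (hγ₁ : γ₁ = -1)
    (ystar vstar ηstar yhat : Fin m → ℂ)
    (hv : vstar = fun j => (1 + γ₁ : ℂ) * P₁ ystar j - (γ₁ : ℂ) * ystar j)
    (hη : ηstar = fun j => (1 + γ₂ : ℂ) * P₂ ystar j - (γ₂ : ℂ) * ystar j)
    (hfix : P₁ ηstar = P₂ vstar)
    (hyhat : yhat = P₁ ηstar)
    (θ : ℝ) (huniq : yhat = fun j => Complex.exp (θ * Complex.I) * y₀ j) :
    vstar = ystar ∧
    P₂ ystar = (fun j => Complex.exp (θ * Complex.I) * y₀ j) ∧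
    (γ₂ ≠ 0 →
      P₁ ystar = (fun j => Complex.exp (θ * Complex.I) * y₀ j) ∧
      Ψᴴ.mulVec ystar = fun k => Complex.exp (θ * Complex.I) * x₀ k) := by
  set c := Complex.exp (θ * Complex.I)
  have hvy : vstar = ystar := by
    subst hγ₁; rw [hv]; funext j; simp
  have hP₂y : P₂ ystar = c • y₀ := by
    rw [← hvy, ← hfix, ← hyhat, huniq]; rfl
  refine ⟨hvy, hP₂y, fun hγ₂ => ?_⟩
  have hfixed : (Ψ * Ψᴴ) *ᵥ (c • y₀) = c • y₀ := by
    rw [mulVec_smul, hy₀, mul_mulVec_mulVec_of_mul_eq_one hΨ]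
  have hηy : ηstar = (1 + (γ₂ : ℂ)) • c • y₀ - (γ₂ : ℂ) • ystar := by
    rw [hη, ← hP₂y]; rfl
  have hP₁y : P₁ ystar = c • y₀ := by
    rw [hP₁]
    refine (mulVecLin (Ψ * Ψᴴ)).map_eq_of_map_smul_sub_smul_eq (γ := (γ₂ : ℂ))
      (by exact_mod_cast hγ₂) hfixed ?_
    rw [mulVecLin_apply, ← hηy, ← hP₁, ← hyhat, huniq]; rfl
  refine ⟨hP₁y, ?_⟩
  rw [← mulVec_mul_mulVec_of_mul_eq_one hΨ, ← hP₁, hP₁y, hy₀, mulVec_smul, mulVec_mulVec, hΨ,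
    one_mulVec]
  rfl

theorem stmt_10 {m n : ℕ} (Ψ : Matrix (Fin m) (Fin n) ℂ) (hΨ : Ψᴴ * Ψ = 1)
    (b : Fin m → ℝ) (hb : ∀ j, 0 < b j)
    (P₁ : (Fin m → ℂ) → (Fin m → ℂ)) (hP₁ : ∀ z, P₁ z = (Ψ * Ψᴴ).mulVec z)
    (P₂ : (Fin m → ℂ) → (Fin m → ℂ))
    (hP₂ : ∀ z j, P₂ z j = (b j : ℂ) * (z j / (‖z j‖ : ℂ)))
    (x₀ : Fin n → ℂ) (y₀ : Fin m → ℂ) (hy₀ : y₀ = Ψ.mulVec x₀)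
    (hmag : ∀ j, ‖y₀ j‖ = b j)
    (γ₁ γ₂ : ℝ) (hγ₁ : γ₁ = -1)
    (ystar vstar ηstar yhat : Fin m → ℂ)
    (hv : vstar = fun j => (1 + γ₁ : ℂ) * P₁ ystar j - (γ₁ : ℂ) * ystar j)
    (hη : ηstar = fun j => (1 + γ₂ : ℂ) * P₂ ystar j - (γ₂ : ℂ) * ystar j)
    (hfix : P₁ ηstar = P₂ vstar)
    (hyhat : yhat = P₁ ηstar)
    (θ : ℝ) (huniq : yhat = fun j => Complex.exp (θ * Complex.I) * y₀ j)
    (hynz : ∀ j, ystar j ≠ 0) :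
    vstar = ystar ∧
    P₂ ystar = (fun j => Complex.exp (θ * Complex.I) * y₀ j) ∧
    (γ₂ ≠ 0 →
      P₁ ystar = (fun j => Complex.exp (θ * Complex.I) * y₀ j) ∧
      Ψᴴ.mulVec ystar = fun k => Complex.exp (θ * Complex.I) * x₀ k) :=
  stmt_10_general Ψ hΨ P₁ hP₁ P₂ x₀ y₀ hy₀ γ₁ γ₂ hγ₁ ystar vstar ηstar yhat hv hη hfix hyhat θ huniq
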